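/- For any positive integer r and functions f, g : ℝ → ℂ, the r-th iterate of the difference quotient satisfies the Leibniz rule δ_λ^r(fg) = Σ_{l=0}^{r} λ^{r-l} · C(r,l) · Σ_{k=0}^{l} C(l,k) · (δ_λ^{r-k} f)·(δ_λ^{k+r-l} g), where products are pointwise and C(n,m) denotes binomial coefficients. -/

import Mathlib

/-!
Let `δ₁`, `δ₂` be the difference quotients of a function `F x y` in its first and second variable.
Shifting both variables at once is `(1 + λ δ₁) (1 + λ δ₂)`, so the difference quotient of the
diagonal `x ↦ F x x` is the diagonal of `(δ₂ + δ₁ + λ δ₁ δ₂) F`. Since `δ₁` and `δ₂` commute,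
`δ_λ^r (f g)` is the diagonal of `(δ₂ + δ₁ + λ δ₁ δ₂)^r (f ⊗ g)`, and expanding this power first in
`λ δ₁ δ₂` and then in `δ₂ + δ₁` by the binomial theorem gives the formula.
-/

noncomputable def dq (l : ℝ) (f : ℝ → ℂ) : ℝ → ℂ := fun x => (f (x + l) - f x) / l

noncomputable def Lop (l : ℝ) (f : ℝ → ℂ) : ℝ → ℂ := fun x => f x + l * dq l f x

open Finset

theorem add_add_mul_mul_pow_eq_sum {R : Type*} [CommSemiring R] (c x y : R) (r : ℕ) :
    (y + x + c * (x * y)) ^ r = ∑ i ∈ range (r + 1), c ^ (r - i) * r.choose i *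
      ∑ k ∈ range (i + 1), i.choose k * (x ^ (r - k) * y ^ (k + r - i)) := by
  rw [add_pow]
  refine sum_congr rfl fun i hi => ?_
  have hir : i ≤ r := Nat.lt_succ_iff.mp (mem_range.mp hi)
  rw [add_pow, sum_mul, sum_mul, mul_sum]
  refine sum_congr rfl fun k hk => ?_
  have hki : k ≤ i := Nat.lt_succ_iff.mp (mem_range.mp hk)
  rw [show r - k = (i - k) + (r - i) by omega, show k + r - i = k + (r - i) by omega]
  ring

open scoped IsMulCommutative in
theorem Commute.add_add_mul_mul_pow_eq_sum {A : Type*} [Semiring A] {c x y : A}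
    (hxy : Commute x y) (hcx : Commute c x) (hcy : Commute c y) (r : ℕ) :
    (y + x + c * (x * y)) ^ r = ∑ i ∈ range (r + 1), c ^ (r - i) * r.choose i *
      ∑ k ∈ range (i + 1), i.choose k * (x ^ (r - k) * y ^ (k + r - i)) := by
  have hcomm : ∀ a ∈ ({c, x, y} : Set A), ∀ b ∈ ({c, x, y} : Set A), Commute a b := by
    simp only [Set.mem_insert_iff, Set.mem_singleton_iff]
    rintro a (rfl | rfl | rfl) b (rfl | rfl | rfl) <;> simp [*, Commute.symm]
  -- compute in the commutative subalgebra generated by `c`, `x`, `y`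
  have := Algebra.isMulCommutative_adjoin ℕ fun a ha b hb => (hcomm a ha b hb).eq
  have mem : ∀ a ∈ ({c, x, y} : Set A), a ∈ Algebra.adjoin ℕ ({c, x, y} : Set A) :=
    fun a ha => Algebra.subset_adjoin ha
  have key := _root_.add_add_mul_mul_pow_eq_sum (R := Algebra.adjoin ℕ ({c, x, y} : Set A))
    ⟨c, mem c (by simp)⟩ ⟨x, mem x (by simp)⟩ ⟨y, mem y (by simp)⟩ r
  have h := congrArg (Algebra.adjoin ℕ ({c, x, y} : Set A)).val key
  simp only [map_pow, map_add, map_mul, map_sum] at h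
  exact h

noncomputable def dqFst (l : ℝ) : Module.End ℂ (ℝ → ℝ → ℂ) where
  toFun F x y := dq l (fun x' => F x' y) x
  map_add' F G := by ext x y; simp only [dq, Pi.add_apply]; ring
  map_smul' c F := by ext x y; simp only [dq, Pi.smul_apply, smul_eq_mul, RingHom.id_apply]; ring

noncomputable def dqSnd (l : ℝ) : Module.End ℂ (ℝ → ℝ → ℂ) where
  toFun F x := dq l (F x)
  map_add' F G := by ext x y; simp only [dq, Pi.add_apply]; ring
  map_smul' c F := by ext x y; simp only [dq, Pi.smul_apply, smul_eq_mul, RingHom.id_apply]; ring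

theorem dqFst_apply (l : ℝ) (F : ℝ → ℝ → ℂ) (x y : ℝ) :
    dqFst l F x y = dq l (fun x' => F x' y) x := rfl

theorem dqSnd_apply (l : ℝ) (F : ℝ → ℝ → ℂ) (x y : ℝ) : dqSnd l F x y = dq l (F x) y := rfl

theorem commute_dqFst_dqSnd (l : ℝ) : Commute (dqFst l) (dqSnd l) := by
  ext F x y
  simp only [Module.End.mul_apply, dqFst_apply, dqSnd_apply, dq]
  ring

theorem dqFst_pow_apply_mul (l : ℝ) (f g : ℝ → ℂ) (n : ℕ) :
    (dqFst l ^ n) (fun x y => f x * g y) = fun x y => (dq l)^[n] f x * g y := by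
  induction n with
  | zero => rfl
  | succ n ih =>
    rw [pow_succ', Module.End.mul_apply, ih]
    ext x y
    simp only [dqFst_apply, Function.iterate_succ_apply' _ n f, dq]
    ring

theorem dqSnd_pow_apply_mul (l : ℝ) (f g : ℝ → ℂ) (n : ℕ) :
    (dqSnd l ^ n) (fun x y => f x * g y) = fun x y => f x * (dq l)^[n] g y := by
  induction n with
  | zero => rfl
  | succ n ih =>
    rw [pow_succ', Module.End.mul_apply, ih]
    ext x y
    simp only [dqSnd_apply, Function.iterate_succ_apply' _ n g, dq]
    ring

theorem dq_diagonal (l : ℝ) (F : ℝ → ℝ → ℂ) :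
    dq l (fun x => F x x) = fun x =>
      ((dqSnd l + dqFst l + algebraMap ℂ _ (l : ℂ) * (dqFst l * dqSnd l)) F) x x := by
  ext x
  simp only [LinearMap.add_apply, Module.End.mul_apply, Module.algebraMap_end_apply, Pi.add_apply,
    Pi.smul_apply, smul_eq_mul, dqFst_apply, dqSnd_apply, dq]
  rcases eq_or_ne (l : ℂ) 0 with hl | hl
  · -- both sides vanish, since division by `0` gives `0`
    simp [hl]
  · field_simp
    ring

theorem iterate_dq_diagonal (l : ℝ) (F : ℝ → ℝ → ℂ) (r : ℕ) :
    (dq l)^[r] (fun x => F x x) = fun x =>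
      ((dqSnd l + dqFst l + algebraMap ℂ _ (l : ℂ) * (dqFst l * dqSnd l)) ^ r) F x x := by
  induction r with
  | zero => rfl
  | succ r ih => rw [Function.iterate_succ_apply', ih, dq_diagonal, pow_succ', Module.End.mul_apply]

theorem stmt3_general (l : ℝ) (r : ℕ) (f g : ℝ → ℂ) :
    (dq l)^[r] (fun x => f x * g x) =
      fun x => ∑ i ∈ Finset.range (r + 1), (l : ℂ) ^ (r - i) * (r.choose i : ℂ) *
        ∑ k ∈ Finset.range (i + 1), (i.choose k : ℂ) *
          ((dq l)^[r - k] f x * (dq l)^[k + r - i] g x) := by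
  have hcomm := Algebra.commute_algebraMap_left (R := ℂ) (A := Module.End ℂ (ℝ → ℝ → ℂ)) (l : ℂ)
  rw [iterate_dq_diagonal l (fun x y => f x * g y) r,
    (commute_dqFst_dqSnd l).add_add_mul_mul_pow_eq_sum (hcomm _) (hcomm _)]
  ext x
  simp [← map_pow, LinearMap.sum_apply, Module.End.natCast_apply, dqFst_pow_apply_mul,
    dqSnd_pow_apply_mul, mul_sum, mul_assoc]

theorem stmt3 (l : ℝ) (hl : l ≠ 0) (r : ℕ) (hr : 0 < r) (f g : ℝ → ℂ) :
    (dq l)^[r] (fun x => f x * g x) =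
      fun x => ∑ i ∈ Finset.range (r + 1), (l : ℂ) ^ (r - i) * (r.choose i : ℂ) *
        ∑ k ∈ Finset.range (i + 1), (i.choose k : ℂ) *
          ((dq l)^[r - k] f x * (dq l)^[k + r - i] g x) :=
  stmt3_general l r f g
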